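/- Let f : U → V and g : V → W be linear maps between finite-dimensional real vector spaces. Then the forward operation on subspaces is covariantly functorial: for every subspace D_U ⊆ U × U*, one has F_{g∘f}(D_U) = F_g(F_f(D_U)). -/

import Mathlib

/-- The forward image `F_φ(D_U) = {(φ(u), β) | u ∈ U, β ∈ V*, (u, β ∘ φ) ∈ D_U}`
of a subspace `D_U ⊆ U ⊕ U*` under a linear map `φ : U → V`. -/
noncomputable def forwardImage {U V : Type*} [AddCommGroup U] [Module ℝ U]
    [AddCommGroup V] [Module ℝ V] (φ : U →ₗ[ℝ] V)
    (D : Submodule ℝ (U × Module.Dual ℝ U)) : Submodule ℝ (V × Module.Dual ℝ V) where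
  carrier := {p | ∃ u : U, p.1 = φ u ∧ (u, p.2.comp φ) ∈ D}
  add_mem' := by
    rintro ⟨v₁, β₁⟩ ⟨v₂, β₂⟩ ⟨u₁, h₁, hD₁⟩ ⟨u₂, h₂, hD₂⟩
    refine ⟨u₁ + u₂, by simp at h₁ h₂; simp [h₁, h₂], ?_⟩
    simpa [LinearMap.add_comp] using D.add_mem hD₁ hD₂
  zero_mem' := ⟨0, by simp, by simp; exact D.zero_mem⟩
  smul_mem' := by
    rintro c ⟨v, β⟩ ⟨u, h, hD⟩
    refine ⟨c • u, by simp at h; simp [h], ?_⟩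
    simpa [LinearMap.smul_comp] using D.smul_mem c hD

theorem mem_forwardImage {U V : Type*} [AddCommGroup U] [Module ℝ U] [AddCommGroup V]
    [Module ℝ V] {φ : U →ₗ[ℝ] V} {D : Submodule ℝ (U × Module.Dual ℝ U)}
    {p : V × Module.Dual ℝ V} :
    p ∈ forwardImage φ D ↔ ∃ u : U, p.1 = φ u ∧ (u, p.2.comp φ) ∈ D :=
  Iff.rfl

theorem forward_functorial_general
    {U V W : Type*} [AddCommGroup U] [Module ℝ U]
    [AddCommGroup V] [Module ℝ V]
    [AddCommGroup W] [Module ℝ W]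
    (f : U →ₗ[ℝ] V) (g : V →ₗ[ℝ] W)
    (DU : Submodule ℝ (U × Module.Dual ℝ U)) :
    forwardImage (g.comp f) DU = forwardImage g (forwardImage f DU) := by
  ext ⟨w, γ⟩
  simp only [mem_forwardImage, LinearMap.comp_apply, ← LinearMap.comp_assoc]
  constructor
  · rintro ⟨u, rfl, hu⟩
    exact ⟨f u, rfl, u, rfl, hu⟩
  · rintro ⟨_, rfl, u, rfl, hu⟩
    exact ⟨u, rfl, hu⟩

/-- The forward operation on subspaces is covariantly functorial:
`F_{g∘f}(D_U) = F_g(F_f(D_U))` for every subspace `D_U ⊆ U ⊕ U*`. -/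
theorem forward_functorial
    {U V W : Type*} [AddCommGroup U] [Module ℝ U] [FiniteDimensional ℝ U]
    [AddCommGroup V] [Module ℝ V] [FiniteDimensional ℝ V]
    [AddCommGroup W] [Module ℝ W] [FiniteDimensional ℝ W]
    (f : U →ₗ[ℝ] V) (g : V →ₗ[ℝ] W)
    (DU : Submodule ℝ (U × Module.Dual ℝ U)) :
    forwardImage (g.comp f) DU = forwardImage g (forwardImage f DU) :=
  forward_functorial_general f g DU
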